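/- If the replacement rule represents neutral drift, then Δ̂_sel(x) = 0 for every state x ∈ {0,1}^G. Furthermore, if {ṽ_g}_{g∈G} is any weighting of the genetic sites such that the ṽ-weighted change due to selection Δ̃_sel(x) = Σ_{g,h∈G} x_g ( e°_{gh} ṽ_h − e°_{hg} ṽ_g ) is zero for every state x, then {ṽ_g}_{g∈G} is a constant multiple of the reproductive values {v_g}_{g∈G}. -/

import Mathlib

/-!
Common formal scaffold for "A mathematical formalism for natural selection
with arbitrary spatial and genetic structure" (Allen & McAvoy).

A population is a finite nonempty set `G` of genetic sites.  A state is a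
subset of `G` (the set of sites occupied by allele `A`); `∅` is the
monoallelic state `a` and `Finset.univ` is the monoallelic state `A`.
A replacement event is a pair `(R, α)` with `R ⊆ G` and `α : R → G`.
-/

open Filter Topology Set

namespace NatSel

variable (G : Type) [Fintype G] [DecidableEq G]

/-- A state of the population: the set of sites holding allele `A`. -/
abbrev PopState := Finset G

/-- A replacement event `(R, α)`: the replaced set `R ⊆ G` together with the
parentage map `α : R → G`. -/
abbrev RepEvent := Σ R : Finset G, (↥R → G)

variable {G}

/-- `x_g ∈ {0,1}` as a real number. -/
def xg (x : PopState G) (g : G) : ℝ := if g ∈ x then 1 else 0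

/-- `α̃` : agrees with `α` on `R`, is the identity off `R`. -/
def tildeMap (e : RepEvent G) (g : G) : G :=
  if h : g ∈ e.1 then e.2 ⟨g, h⟩ else g

/-- `p` is a replacement rule: for each state it gives a probability
distribution over replacement events. -/
def IsRule (p : PopState G → RepEvent G → ℝ) : Prop :=
  (∀ x e, 0 ≤ p x e) ∧ ∀ x, ∑ e : RepEvent G, p x e = 1

/-- The Fixation Axiom. -/
def FixationAxiom (p : PopState G → RepEvent G → ℝ) : Prop :=
  ∃ g : G, ∃ m : ℕ, 0 < m ∧ ∃ ev : Fin m → RepEvent G,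
    (∀ k, ∀ x : PopState G, 0 < p x (ev k)) ∧
    (∃ k, g ∈ (ev k).1) ∧
    (∀ h : G, (List.ofFn fun k => tildeMap (ev k)).foldr (· ∘ ·) id h = g)

/-- `e_{gh}(x)`: marginal probability that the allele in site `h` is replaced
by a copy of the allele in site `g`, in state `x`. -/
def eMarg (p : PopState G → RepEvent G → ℝ) (g h : G) (x : PopState G) : ℝ :=
  ∑ e : RepEvent G, if hh : h ∈ e.1 then (if e.2 ⟨h, hh⟩ = g then p x e else 0) else 0

/-- `b_g(x)`: expected offspring number (birth rate) of site `g` in state `x`. -/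
def bRate (p : PopState G → RepEvent G → ℝ) (g : G) (x : PopState G) : ℝ :=
  ∑ h, eMarg p g h x

/-- `d_g(x)`: death probability of site `g` in state `x`. -/
def dProb (p : PopState G → RepEvent G → ℝ) (g : G) (x : PopState G) : ℝ :=
  ∑ h, eMarg p h g x

/-- `b(x)`: total expected offspring number in state `x`. -/
def bTot (p : PopState G → RepEvent G → ℝ) (x : PopState G) : ℝ :=
  ∑ g, bRate p g x

/-- Probability that a replaced site whose parent holds allele `parent`
(`true` = `A`) acquires allele `child`, with mutation probability `u` and
mutational bias `ν`. -/
def siteProb (u ν : ℝ) (parent child : Bool) : ℝ :=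
  (if child = parent then 1 - u else 0) + (if child = true then u * ν else u * (1 - ν))

/-- One-step transition probability `P_{x → y}` of the evolutionary Markov
chain with replacement rule `p`, mutation probability `u`, mutational bias `ν`. -/
def step (p : PopState G → RepEvent G → ℝ) (u ν : ℝ) (x y : PopState G) : ℝ :=
  ∑ e : RepEvent G, p x e *
    (if y \ e.1 = x \ e.1 then
       ∏ g ∈ e.1.attach, siteProb u ν (decide (e.2 g ∈ x)) (decide (g.1 ∈ y))
     else 0)

/-- `t`-step transition probabilities of a kernel `P`. -/
def iterKer (P : PopState G → PopState G → ℝ) : ℕ → PopState G → PopState G → ℝ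
  | 0, x, y => if x = y then 1 else 0
  | (t + 1), x, y => ∑ z : PopState G, iterKer P t x z * P z y

/-- The state obtained from `x` by the (mutation-free) replacement event `e`. -/
def applyEvent (e : RepEvent G) (x : PopState G) : PopState G :=
  Finset.univ.filter fun g => tildeMap e g ∈ x

/-- One-step transition probability of the mutation-free (`u = 0`) chain. -/
def step0 (p : PopState G → RepEvent G → ℝ) (x y : PopState G) : ℝ :=
  ∑ e : RepEvent G, if y = applyEvent e x then p x e else 0

/-- The mutant appearance distribution `μ_A`: probability `d_g(a)/b(a)` on the
state `{g}`, for each `g ∈ G`. -/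
noncomputable def muA (p : PopState G → RepEvent G → ℝ) (x : PopState G) : ℝ :=
  ∑ g : G, if x = {g} then dProb p g ∅ / bTot p ∅ else 0

/-- The mutant appearance distribution `μ_a`: probability `d_g(A)/b(A)` on the
state `G \ {g}`, for each `g ∈ G`. -/
noncomputable def mua (p : PopState G → RepEvent G → ℝ) (x : PopState G) : ℝ :=
  ∑ g : G, if x = Finset.univ \ {g} then dProb p g Finset.univ / bTot p Finset.univ else 0

/-- Fixation probability `ρ_A` (computed at `u = 0`). -/
noncomputable def rhoA (p : PopState G → RepEvent G → ℝ) (ν : ℝ) : ℝ :=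
  ∑ x : PopState G, muA p x *
    limUnder atTop (fun t => iterKer (step p 0 ν) t x Finset.univ)

/-- Fixation probability `ρ_a` (computed at `u = 0`). -/
noncomputable def rhoa (p : PopState G → RepEvent G → ℝ) (ν : ℝ) : ℝ :=
  ∑ x : PopState G, mua p x *
    limUnder atTop (fun t => iterKer (step p 0 ν) t x ∅)

/-- Frequency `x = (1/n) Σ_g x_g` of allele `A`. -/
noncomputable def freq (x : PopState G) : ℝ := (x.card : ℝ) / (Fintype.card G : ℝ)

/-- Expected change due to selection, `Δ_sel(x) = Σ_g x_g (b_g(x) − d_g(x))`. -/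
def deltaSel (p : PopState G → RepEvent G → ℝ) (x : PopState G) : ℝ :=
  ∑ g, xg x g * (bRate p g x - dProb p g x)

/-- The finset of states other than the monoallelic states `a = ∅`, `A = univ`. -/
def offStates (G : Type) [Fintype G] [DecidableEq G] : Finset (PopState G) :=
  Finset.univ.filter fun x : PopState G => x ≠ ∅ ∧ x ≠ Finset.univ

/-- Assumption 1: consistency of monoallelic states. -/
def ConsistentMono (p : PopState G → RepEvent G → ℝ) : Prop :=
  ∀ e : RepEvent G, p ∅ e = p Finset.univ e

/-- A replacement rule represents neutral drift: probabilities are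
state-independent. -/
def NeutralDrift (p : PopState G → RepEvent G → ℝ) : Prop :=
  ∀ x e, p x e = p ∅ e

/-- Reproductive values: `{v_g}` solves `d°_g v_g = Σ_h e°_{gh} v_h` (with the
monoallelic-state quantities) together with `Σ_g v_g = n`. -/
def IsRepVal (p : PopState G → RepEvent G → ℝ) (v : G → ℝ) : Prop :=
  (∀ g, dProb p g ∅ * v g = ∑ h, eMarg p g h ∅ * v h) ∧
    ∑ g, v g = (Fintype.card G : ℝ)

/-- RV-weighted birth rate `b̂_g(x) = Σ_h e_{gh}(x) v_h`. -/
def bHat (p : PopState G → RepEvent G → ℝ) (v : G → ℝ) (g : G) (x : PopState G) : ℝ :=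
  ∑ h, eMarg p g h x * v h

/-- RV-weighted death rate `d̂_g(x) = v_g d_g(x)`. -/
def dHat (p : PopState G → RepEvent G → ℝ) (v : G → ℝ) (g : G) (x : PopState G) : ℝ :=
  v g * dProb p g x

/-- Total RV-weighted birth rate `b̂(x)`. -/
def bHatTot (p : PopState G → RepEvent G → ℝ) (v : G → ℝ) (x : PopState G) : ℝ :=
  ∑ g, bHat p v g x

/-- RV-weighted change due to selection `Δ̂_sel(x) = Σ_g x_g (b̂_g(x) − d̂_g(x))`. -/
def deltaHatSel (p : PopState G → RepEvent G → ℝ) (v : G → ℝ) (x : PopState G) : ℝ :=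
  ∑ g, xg x g * (bHat p v g x - dHat p v g x)

/-- Fitness `w_g(x) = v_g − d̂_g(x) + b̂_g(x)`. -/
def fitness (p : PopState G → RepEvent G → ℝ) (v : G → ℝ) (g : G) (x : PopState G) : ℝ :=
  v g - dHat p v g x + bHat p v g x

/-- RV-weighted frequency `x̂ = (1/n) Σ_g v_g x_g`. -/
noncomputable def freqHat (v : G → ℝ) (x : PopState G) : ℝ :=
  (∑ g, v g * xg x g) / (Fintype.card G : ℝ)

/-- `{π u}_{0<u≤1}` is, for each mutation probability `0 < u ≤ 1`, a stationary
distribution of the evolutionary Markov chain (i.e. the mutation-selection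
stationary distribution, which is unique by ergodicity). -/
def IsMSSFamily (p : PopState G → RepEvent G → ℝ) (ν : ℝ)
    (π : ℝ → PopState G → ℝ) : Prop :=
  ∀ u, u ∈ Set.Ioc (0 : ℝ) 1 →
    (∀ x, 0 ≤ π u x) ∧ (∑ x : PopState G, π u x = 1) ∧
      ∀ y, π u y = ∑ x : PopState G, π u x * step p u ν x y

/-- `πR` is the rare-mutation conditional (RMC) distribution associated with
the MSS family `π`: for each non-monoallelic state `x`,
`πR x = lim_{u→0} π_MSS(x)/(1 − π_MSS(A) − π_MSS(a))`. -/
def IsRMC (π : ℝ → PopState G → ℝ) (πR : PopState G → ℝ) : Prop :=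
  ∀ x ∈ offStates G,
    Tendsto (fun u => π u x / (1 - π u Finset.univ - π u ∅))
      (nhdsWithin 0 (Set.Ioi 0)) (nhds (πR x))

end NatSel

open NatSel

/-!
Under neutral drift `e_{gh}(x) = e°_{gh}`, so `b̂_g(x) − d̂_g(x)` is the defect of the
reproductive-value equation at `g`, which is zero.

For uniqueness, evaluating `Δ̃_sel` at the singleton states shows that `ṽ` solves the same
equations, i.e. lies in the kernel of `L = diag(d°) − E°`. A vector `u` in the kernel of `Lᵀ`
takes at each site an `e°`-weighted average of its values at the parent sites. By the Fixation
Axiom all ancestral lines reach a common site, so by the maximum principle `u` is constant.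
Hence `dim ker L = dim ker Lᵀ = 1`, and `ṽ` is a multiple of `v ≠ 0`.
-/

open Relation Matrix

section InDegreeLaplacian

variable {ι : Type*} [Fintype ι] [DecidableEq ι]

def inDegreeLaplacian (E : Matrix ι ι ℝ) : Matrix ι ι ℝ :=
  Matrix.diagonal (fun j => ∑ i, E i j) - E

variable {E : Matrix ι ι ℝ}

theorem inDegreeLaplacian_mulVec_apply (w : ι → ℝ) (i : ι) :
    (inDegreeLaplacian E *ᵥ w) i = (∑ j, E j i) * w i - ∑ j, E i j * w j := by
  rw [inDegreeLaplacian, sub_mulVec, Pi.sub_apply, mulVec_diagonal]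
  rfl

theorem inDegreeLaplacian_transpose_mulVec_apply (u : ι → ℝ) (j : ι) :
    ((inDegreeLaplacian E)ᵀ *ᵥ u) j = ∑ i, E i j * (u j - u i) := by
  rw [inDegreeLaplacian, transpose_sub, diagonal_transpose, sub_mulVec, Pi.sub_apply,
    mulVec_diagonal]
  simp only [mulVec, dotProduct, transpose_apply, mul_sub, Finset.sum_sub_distrib, Finset.sum_mul]

theorem apply_eq_of_reflTransGen_of_forall_le (hE : ∀ i j, 0 ≤ E i j) {u : ι → ℝ}
    (hu : (inDegreeLaplacian E)ᵀ *ᵥ u = 0) {a b : ι} (hmax : ∀ i, u i ≤ u a)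
    (hab : ReflTransGen (fun j i => 0 < E i j) a b) : u b = u a := by
  induction hab with
  | refl => rfl
  | @tail j i _ hij ih =>
    have hsum : ∑ k, E k j * (u j - u k) = 0 := by
      rw [← inDegreeLaplacian_transpose_mulVec_apply, hu, Pi.zero_apply]
    have hterm := (Finset.sum_eq_zero_iff_of_nonneg fun k _ =>
      mul_nonneg (hE k j) (by linarith [hmax k])).1 hsum i (Finset.mem_univ i)
    have hji : u j - u i = 0 := (mul_eq_zero.1 hterm).resolve_left hij.ne'
    linarith

theorem apply_eq_of_inDegreeLaplacian_transpose_mulVec_eq_zero (hE : ∀ i j, 0 ≤ E i j) {r : ι}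
    (hroot : ∀ i, ReflTransGen (fun j i => 0 < E i j) i r) {u : ι → ℝ}
    (hu : (inDegreeLaplacian E)ᵀ *ᵥ u = 0) (i : ι) : u i = u r := by
  have : Nonempty ι := ⟨r⟩
  obtain ⟨a, ha⟩ := Finite.exists_max u
  obtain ⟨b, hb⟩ := Finite.exists_min u
  have hneg : (inDegreeLaplacian E)ᵀ *ᵥ (-u) = 0 := by rw [Matrix.mulVec_neg, hu, neg_zero]
  have hra := apply_eq_of_reflTransGen_of_forall_le hE hu ha (hroot a)
  have hrb := apply_eq_of_reflTransGen_of_forall_le hE hneg (fun i => neg_le_neg (hb i)) (hroot b)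
  simp only [Pi.neg_apply, neg_inj] at hrb
  linarith [ha i, hb i]

theorem finrank_ker_inDegreeLaplacian_le_one (hE : ∀ i j, 0 ≤ E i j) {r : ι}
    (hroot : ∀ i, ReflTransGen (fun j i => 0 < E i j) i r) :
    Module.finrank ℝ (LinearMap.ker (inDegreeLaplacian E).mulVecLin) ≤ 1 := by
  have hT : LinearMap.ker (inDegreeLaplacian E)ᵀ.mulVecLin ≤ Submodule.span ℝ {fun _ => 1} := by
    intro u hu
    refine Submodule.mem_span_singleton.2 ⟨u r, funext fun i => ?_⟩
    simp [apply_eq_of_inDegreeLaplacian_transpose_mulVec_eq_zero hE hroot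
      (LinearMap.mem_ker.1 hu) i]
  have hrank (A : Matrix ι ι ℝ) :
      A.rank + Module.finrank ℝ (LinearMap.ker A.mulVecLin) = Fintype.card ι := by
    rw [Matrix.rank, LinearMap.finrank_range_add_finrank_ker, Module.finrank_fintype_fun_eq_card]
  have hkerT : Module.finrank ℝ (LinearMap.ker (inDegreeLaplacian E)ᵀ.mulVecLin) ≤ 1 :=
    (Submodule.finrank_mono hT).trans
      ((finrank_span_le_card ({fun _ => 1} : Set (ι → ℝ))).trans (by simp))
  have hL := hrank (inDegreeLaplacian E)
  have hLT := hrank (inDegreeLaplacian E)ᵀ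
  rw [Matrix.rank_transpose] at hLT
  omega

theorem exists_eq_smul_of_inDegreeLaplacian_mulVec_eq_zero (hE : ∀ i j, 0 ≤ E i j) {r : ι}
    (hroot : ∀ i, ReflTransGen (fun j i => 0 < E i j) i r) {v w : ι → ℝ}
    (hv : inDegreeLaplacian E *ᵥ v = 0) (hv0 : v ≠ 0) (hw : inDegreeLaplacian E *ᵥ w = 0) :
    ∃ c : ℝ, w = c • v := by
  have hspan : Submodule.span ℝ {v} = LinearMap.ker (inDegreeLaplacian E).mulVecLin :=
    Submodule.eq_of_le_of_finrank_le
      ((Submodule.span_singleton_le_iff_mem _ _).2 (LinearMap.mem_ker.2 hv))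
      ((finrank_ker_inDegreeLaplacian_le_one hE hroot).trans (finrank_span_singleton hv0).ge)
  obtain ⟨c, hc⟩ := Submodule.mem_span_singleton.1 (hspan ▸ LinearMap.mem_ker.2 hw)
  exact ⟨c, hc.symm⟩

end InDegreeLaplacian

theorem reflTransGen_foldr_comp_apply {α : Type*} {r : α → α → Prop} :
    ∀ l : List (α → α), (∀ f ∈ l, ∀ a, ReflTransGen r a (f a)) →
      ∀ a, ReflTransGen r a (l.foldr (· ∘ ·) id a)
  | [], _, _ => ReflTransGen.refl
  | f :: l, hl, a =>
    (reflTransGen_foldr_comp_apply l (fun f' hf => hl f' (List.mem_cons_of_mem _ hf)) a).trans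
      (hl f List.mem_cons_self _)

namespace NatSel

variable {G : Type} [Fintype G] [DecidableEq G] {p : PopState G → RepEvent G → ℝ}

def eMatrix (p : PopState G → RepEvent G → ℝ) (x : PopState G) : Matrix G G ℝ :=
  Matrix.of fun g h => eMarg p g h x

def deltaTildeSel (p : PopState G → RepEvent G → ℝ) (w : G → ℝ) (x : PopState G) : ℝ :=
  ∑ g, ∑ h, xg x g * (eMarg p g h ∅ * w h - eMarg p h g ∅ * w g)

theorem eMarg_nonneg (hp : ∀ x e, 0 ≤ p x e) (g h : G) (x : PopState G) :
    0 ≤ eMarg p g h x :=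
  Finset.sum_nonneg fun e _ => by split_ifs <;> first | exact hp _ _ | exact le_rfl

theorem le_eMarg_of_mem (hp : ∀ x e, 0 ≤ p x e) (x : PopState G) (e : RepEvent G) {h : G}
    (hh : h ∈ e.1) : p x e ≤ eMarg p (e.2 ⟨h, hh⟩) h x := by
  have := Finset.single_le_sum (f := fun e' : RepEvent G =>
      if hh' : h ∈ e'.1 then (if e'.2 ⟨h, hh'⟩ = e.2 ⟨h, hh⟩ then p x e' else 0) else 0)
    (fun e' _ => by split_ifs <;> first | exact hp _ _ | exact le_rfl)
    (Finset.mem_univ e)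
  simpa [hh, eMarg] using this

theorem reflTransGen_tildeMap (hp : ∀ x e, 0 ≤ p x e) {x : PopState G} {e : RepEvent G}
    (he : 0 < p x e) (a : G) : ReflTransGen (fun c pc => 0 < eMarg p pc c x) a (tildeMap e a) := by
  unfold tildeMap
  split_ifs with ha
  · exact .single (he.trans_le (le_eMarg_of_mem hp x e ha))
  · exact .refl

theorem FixationAxiom.exists_forall_reflTransGen (hp : ∀ x e, 0 ≤ p x e) (hfix : FixationAxiom p) :
    ∃ g, ∀ x h, ReflTransGen (fun c pc => 0 < eMarg p pc c x) h g := by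
  obtain ⟨g, m, -, ev, hpos, -, hcomp⟩ := hfix
  refine ⟨g, fun x h => hcomp h ▸ reflTransGen_foldr_comp_apply _ ?_ h⟩
  intro f hf
  obtain ⟨k, rfl⟩ := List.mem_ofFn.1 hf
  exact reflTransGen_tildeMap hp (hpos k x)

theorem inDegreeLaplacian_eMatrix_mulVec_apply (x : PopState G) (w : G → ℝ) (g : G) :
    (inDegreeLaplacian (eMatrix p x) *ᵥ w) g = dProb p g x * w g - ∑ h, eMarg p g h x * w h :=
  inDegreeLaplacian_mulVec_apply w g

theorem IsRepVal.inDegreeLaplacian_mulVec_eq_zero {v : G → ℝ} (hv : IsRepVal p v) :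
    inDegreeLaplacian (eMatrix p ∅) *ᵥ v = 0 :=
  funext fun g => by rw [inDegreeLaplacian_eMatrix_mulVec_apply, hv.1 g, sub_self, Pi.zero_apply]

theorem IsRepVal.ne_zero [Nonempty G] {v : G → ℝ} (hv : IsRepVal p v) : v ≠ 0 := by
  rintro rfl
  have := hv.2
  simp only [Pi.zero_apply, Finset.sum_const_zero] at this
  exact (Nat.cast_ne_zero.2 Fintype.card_ne_zero) this.symm

theorem sum_xg_singleton_mul (g₀ : G) (f : G → ℝ) : ∑ g, xg {g₀} g * f g = f g₀ := by
  simp [xg]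

theorem deltaTildeSel_singleton (w : G → ℝ) (g : G) :
    deltaTildeSel p w {g} = -(inDegreeLaplacian (eMatrix p ∅) *ᵥ w) g := by
  rw [inDegreeLaplacian_eMatrix_mulVec_apply, deltaTildeSel]
  simp only [← Finset.mul_sum]
  rw [sum_xg_singleton_mul, Finset.sum_sub_distrib, dProb, Finset.sum_mul]
  ring

theorem NeutralDrift.eMarg_eq (hneut : NeutralDrift p) (g h : G) (x : PopState G) :
    eMarg p g h x = eMarg p g h ∅ := by
  simp only [eMarg, hneut x]

theorem NeutralDrift.deltaHatSel_eq_zero (hneut : NeutralDrift p) {v : G → ℝ}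
    (hv : inDegreeLaplacian (eMatrix p ∅) *ᵥ v = 0) (x : PopState G) : deltaHatSel p v x = 0 := by
  refine Finset.sum_eq_zero fun g _ => ?_
  have hg := congrFun hv g
  rw [inDegreeLaplacian_eMatrix_mulVec_apply] at hg
  simp only [bHat, dHat, dProb, hneut.eMarg_eq _ _ x] at hg ⊢
  rw [Pi.zero_apply] at hg
  rw [← mul_zero (xg x g)]
  congr 1
  linarith

theorem inDegreeLaplacian_mulVec_eq_zero_of_deltaTildeSel {w : G → ℝ}
    (hw : ∀ x, deltaTildeSel p w x = 0) : inDegreeLaplacian (eMatrix p ∅) *ᵥ w = 0 :=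
  funext fun g => neg_eq_zero.1 (deltaTildeSel_singleton (p := p) w g ▸ hw {g})

end NatSel

/-- Theorem 7 of Allen & McAvoy: under neutral drift, the
RV-weighted change due to selection vanishes in every state; moreover the
reproductive values are the unique (up to constant multiples) site weighting
`ṽ` for which the `ṽ`-weighted change due to selection
`Δ̃_sel(x) = Σ_{g,h} x_g (e°_{gh} ṽ_h − e°_{hg} ṽ_g)` vanishes in every state. -/
theorem statement7
    {G : Type} [Fintype G] [DecidableEq G] [Nonempty G]
    (p : PopState G → RepEvent G → ℝ) (hrule : IsRule p) (hfix : FixationAxiom p)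
    (hneut : NeutralDrift p)
    (v : G → ℝ) (hv : IsRepVal p v) :
    (∀ x : PopState G, deltaHatSel p v x = 0) ∧
    (∀ vt : G → ℝ,
      (∀ x : PopState G,
        (∑ g, ∑ h, xg x g * (eMarg p g h ∅ * vt h - eMarg p h g ∅ * vt g)) = 0) →
      ∃ c : ℝ, ∀ g, vt g = c * v g) := by
  have hLv := hv.inDegreeLaplacian_mulVec_eq_zero
  refine ⟨hneut.deltaHatSel_eq_zero hLv, fun vt hvt => ?_⟩
  obtain ⟨r, hroot⟩ := hfix.exists_forall_reflTransGen hrule.1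
  obtain ⟨c, hc⟩ := exists_eq_smul_of_inDegreeLaplacian_mulVec_eq_zero
    (fun g h => eMarg_nonneg hrule.1 g h ∅) (hroot ∅) hLv hv.ne_zero
    (inDegreeLaplacian_mulVec_eq_zero_of_deltaTildeSel hvt)
  exact ⟨c, fun g => congrFun hc g⟩
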